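/- arXiv:1906.06873 — 3 statements merged into one kernel-verified Lean document; each statement's English description precedes it below -/
import Mathlib

section
/- For the deletion-robust BinVal problem with budget k ≤ n and deletion parameter d < k, defined by F(x) = min over z ⊆ x with |z|_1 ≤ d of Σ_i 2^{n−i}(x_i − z_i) subject to |x|_1 ≤ k, the string 1^k 0^{n−k} is the unique optimal solution. -/
/-- Number of 1-bits of a binary string. -/
def onesCount {n : ℕ} (x : Fin n → Bool) : ℕ :=
  (Finset.univ.filter fun i => x i = true).card

/-- The deletion-robust BinVal objective: the remaining value `Σ 2^(n-i)(x_i - z_i)`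
after an adversary deletes up to `d` of the ones (`z ⊆ x`, `|z|₁ ≤ d`).
(Positions are 0-indexed, so the weight of position `i` is `2^(n-1-i)`.) -/
noncomputable def drBinVal (n d : ℕ) (x : Fin n → Bool) : ℕ :=
  sInf {v : ℕ | ∃ z : Fin n → Bool,
    (∀ i, z i = true → x i = true) ∧ onesCount z ≤ d ∧
    v = ∑ i : Fin n, if x i = true ∧ z i = false then 2 ^ (n - 1 - (i : ℕ)) else 0}

/-! Write `w(A)` for the total weight of a set `A` of positions. For `1^k 0^(n-k)`, deleting
`D` leaves `w([0,k)) - w(D)`, and at most `d` positions weigh at most `w([0,d))`, so the robust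
value is at least `w([d,k))`. For any other `x` with at most `k` ones, let the adversary delete the
`d` leftmost ones: every survivor sits at a position `≥ d`, so the survivors weigh at most the same
number of consecutive positions starting at `d`, which is at most `w([d,k))`, and equality
throughout forces the survivors to be `[d,k)` and the deleted ones `[0,d)`, i.e.
`x = 1^k 0^(n-k)`. -/

open Finset

namespace Finset

theorem sum_lt_sum_Ico_card_of_strictAntiOn {M : Type*} [AddCommMonoid M] [PartialOrder M]
    [IsOrderedCancelAddMonoid M] {f : ℕ → M} {a b : ℕ} (hf : StrictAntiOn f (Set.Iio b))
    {s : Finset ℕ} (hs : ∀ i ∈ s, a ≤ i ∧ i < b) (hne : s ≠ Ico a (a + #s)) :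
    ∑ i ∈ s, f i < ∑ i ∈ Ico a (a + #s), f i := by
  induction s using Finset.induction_on_max with
  | empty => simp at hne
  | insert m t htm ih =>
    have hmt : m ∉ t := fun h => (htm m h).false
    have hst : ∀ i ∈ t, a ≤ i ∧ i < b := fun i hi => hs i (mem_insert_of_mem hi)
    obtain ⟨ham, hmb⟩ := hs m (mem_insert_self m t)
    have hcard : a + #t ≤ m := by
      have : t ⊆ Ico a m := fun i hi => mem_Ico.2 ⟨(hst i hi).1, htm i hi⟩
      have := card_le_card this
      rw [Nat.card_Ico] at this
      omega
    have hfm : f m ≤ f (a + #t) := hf.antitoneOn (Set.mem_Iio.2 (by omega)) hmb hcard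
    rw [card_insert_of_notMem hmt, sum_insert hmt, ← add_assoc,
      Nat.Ico_succ_right_eq_insert_Ico (by omega), sum_insert (by simp)]
    by_cases ht : t = Ico a (a + #t)
    · have hma : m ≠ a + #t := by
        rintro rfl
        rw [card_insert_of_notMem hmt, ← add_assoc, Nat.Ico_succ_right_eq_insert_Ico (by omega),
          ← ht] at hne
        exact hne rfl
      rw [← ht]
      exact add_lt_add_left (hf (Set.mem_Iio.2 (by omega)) hmb (lt_of_le_of_ne hcard hma.symm)) _
    · exact add_lt_add_of_le_of_lt hfm (ih hst ht)

theorem sum_le_sum_Ico_card_of_strictAntiOn {M : Type*} [AddCommMonoid M] [PartialOrder M]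
    [IsOrderedCancelAddMonoid M] {f : ℕ → M} {a b : ℕ} (hf : StrictAntiOn f (Set.Iio b))
    {s : Finset ℕ} (hs : ∀ i ∈ s, a ≤ i ∧ i < b) :
    ∑ i ∈ s, f i ≤ ∑ i ∈ Ico a (a + #s), f i := by
  by_cases h : s = Ico a (a + #s)
  · exact (congrArg (∑ i ∈ ·, f i) h).le
  · exact (sum_lt_sum_Ico_card_of_strictAntiOn hf hs h).le

theorem exists_subset_card_eq_forall_lt {α : Type*} [LinearOrder α] {s : Finset α} {d : ℕ}
    (hd : d ≤ #s) : ∃ t ⊆ s, #t = d ∧ ∀ x ∈ t, ∀ y ∈ s \ t, x < y := by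
  induction d with
  | zero => exact ⟨∅, empty_subset s, card_empty, by simp⟩
  | succ d ih =>
    obtain ⟨t, hts, htd, hlt⟩ := ih (by omega)
    have hne : (s \ t).Nonempty := by
      rw [← card_pos, card_sdiff_of_subset hts]
      omega
    set m := (s \ t).min' hne
    have hm : m ∈ s \ t := min'_mem _ hne
    refine ⟨insert m t, insert_subset (mem_sdiff.1 hm).1 hts, ?_, ?_⟩
    · rw [card_insert_of_notMem (mem_sdiff.1 hm).2, htd]
    · intro x hx y hy
      rw [sdiff_insert] at hy
      rcases mem_insert.1 hx with rfl | hx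
      · exact lt_of_le_of_ne (min'_le _ _ (mem_of_mem_erase hy)) (ne_of_mem_erase hy).symm
      · exact hlt x hx y (mem_of_mem_erase hy)

end Finset

section Adversary

variable {f : ℕ → ℕ} {n d k : ℕ}

theorem sum_Ico_le_sum_range_sdiff (hf : StrictAntiOn f (Set.Iio n)) (hdk : d ≤ k) (hkn : k ≤ n)
    {D : Finset ℕ} (hD : D ⊆ range k) (hDd : #D ≤ d) :
    ∑ i ∈ Ico d k, f i ≤ ∑ i ∈ range k \ D, f i := by
  have hDn : ∀ i ∈ D, 0 ≤ i ∧ i < n := fun i hi => ⟨i.zero_le, (mem_range.1 (hD hi)).trans_le hkn⟩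
  have hDle : ∑ i ∈ D, f i ≤ ∑ i ∈ range d, f i := calc
    ∑ i ∈ D, f i ≤ ∑ i ∈ Ico 0 (0 + #D), f i := sum_le_sum_Ico_card_of_strictAntiOn hf hDn
    _ ≤ ∑ i ∈ range d, f i := by
      rw [zero_add, ← range_eq_Ico]
      exact sum_le_sum_of_subset (range_subset_range.2 hDd)
  have hsplit := sum_sdiff hD (f := f)
  have hsplit' := sum_range_add_sum_Ico f hdk
  omega

theorem exists_sum_sdiff_lt_sum_Ico (hf : StrictAntiOn f (Set.Iio n)) (hf0 : ∀ i < n, 0 < f i)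
    (hdk : d < k) (hkn : k ≤ n) {S : Finset ℕ} (hSn : S ⊆ range n) (hSk : #S ≤ k)
    (hS : S ≠ range k) : ∃ D ⊆ S, #D ≤ d ∧ ∑ i ∈ S \ D, f i < ∑ i ∈ Ico d k, f i := by
  rcases le_or_gt #S d with hSd | hdS
  · refine ⟨S, subset_rfl, hSd, ?_⟩
    rw [sdiff_self, bot_eq_empty, sum_empty]
    exact sum_pos (fun i hi => hf0 i (by rw [mem_Ico] at hi; omega)) (nonempty_Ico.2 hdk)
  obtain ⟨D, hDS, hDd, hDlt⟩ := exists_subset_card_eq_forall_lt hdS.le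
  refine ⟨D, hDS, hDd.le, ?_⟩
  have hR : ∀ i ∈ S \ D, d ≤ i ∧ i < n := fun i hi =>
    ⟨hDd ▸ card_range i ▸ card_le_card fun x hx => mem_range.2 (hDlt x hx i hi),
      mem_range.1 (hSn (mem_sdiff.1 hi).1)⟩
  have hRk : d + #(S \ D) ≤ k := by rw [card_sdiff_of_subset hDS]; omega
  -- the `d` deleted positions lie below `d ∈ S \ D`, so they fill `[0, d)`
  have hRne : S \ D ≠ Ico d k := by
    intro hRI
    have hDr : D = range d := eq_of_subset_of_card_le
      (fun x hx => mem_range.2 (hDlt x hx d (hRI ▸ mem_Ico.2 ⟨le_rfl, hdk⟩))) (by simp [hDd])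
    apply hS
    rw [← union_sdiff_of_subset hDS, hRI, hDr, range_eq_Ico, Ico_union_Ico_eq_Ico d.zero_le hdk.le,
      range_eq_Ico]
  rcases hRk.lt_or_eq with hlt | heq
  · calc ∑ i ∈ S \ D, f i ≤ ∑ i ∈ Ico d (d + #(S \ D)), f i :=
          sum_le_sum_Ico_card_of_strictAntiOn hf hR
      _ < ∑ i ∈ Ico d k, f i :=
          sum_lt_sum_of_subset (Ico_subset_Ico_right hlt.le)
            (mem_Ico.2 ⟨by omega, hlt⟩) (by simp) (hf0 _ (by omega))
            fun _ _ _ => Nat.zero_le _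
  · rw [← heq] at hRne ⊢
    exact sum_lt_sum_Ico_card_of_strictAntiOn hf hR hRne

end Adversary

section OnesFinset

variable {n : ℕ}

def onesFinset (x : Fin n → Bool) : Finset ℕ :=
  (univ.filter fun i => x i = true).map Fin.valEmbedding

theorem mem_onesFinset {x : Fin n → Bool} {i : ℕ} :
    i ∈ onesFinset x ↔ ∃ h : i < n, x ⟨i, h⟩ = true := by
  simp only [onesFinset, mem_map, mem_filter, mem_univ, true_and, Fin.valEmbedding_apply]
  constructor
  · rintro ⟨a, ha, rfl⟩
    exact ⟨a.isLt, ha⟩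
  · rintro ⟨h, hi⟩
    exact ⟨_, hi, rfl⟩

theorem card_onesFinset (x : Fin n → Bool) : #(onesFinset x) = onesCount x :=
  card_map _

theorem onesFinset_subset_range (x : Fin n → Bool) : onesFinset x ⊆ range n := fun _ hi =>
  mem_range.2 (mem_onesFinset.1 hi).1

theorem onesFinset_injective : Function.Injective (onesFinset (n := n)) := by
  intro x y hxy
  funext i
  exact Bool.eq_iff_iff.2 (by simpa [mem_onesFinset] using congrArg ((i : ℕ) ∈ ·) hxy)

theorem onesFinset_decide_mem {D : Finset ℕ} (hD : D ⊆ range n) :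
    onesFinset (fun i : Fin n => decide ((i : ℕ) ∈ D)) = D := by
  ext i
  simp only [mem_onesFinset, decide_eq_true_eq, exists_prop, and_iff_right_iff_imp]
  exact fun hi => mem_range.1 (hD hi)

theorem onesFinset_decide_lt {k : ℕ} (hk : k ≤ n) :
    onesFinset (fun i : Fin n => decide ((i : ℕ) < k)) = range k := by
  simpa using onesFinset_decide_mem (range_subset_range.2 hk)

theorem sum_ite_eq_sum_onesFinset_sdiff {M : Type*} [AddCommMonoid M] (x z : Fin n → Bool)
    (f : ℕ → M) : (∑ i : Fin n, if x i = true ∧ z i = false then f i else 0) =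
      ∑ i ∈ onesFinset x \ onesFinset z, f i := by
  rw [onesFinset, onesFinset, ← Finset.map_sdiff, sum_map, ← sum_filter]
  congr 1
  ext i
  simp

end OnesFinset

theorem drBinVal_eq_sInf (n d : ℕ) (x : Fin n → Bool) :
    drBinVal n d x = sInf ((fun D => ∑ i ∈ onesFinset x \ D, 2 ^ (n - 1 - i)) ''
      {D | D ⊆ onesFinset x ∧ #D ≤ d}) := by
  rw [drBinVal]
  congr 1
  ext v
  constructor
  · rintro ⟨z, hzx, hzd, rfl⟩
    refine ⟨onesFinset z, ⟨fun i hi => ?_, card_onesFinset z ▸ hzd⟩,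
      (sum_ite_eq_sum_onesFinset_sdiff x z _).symm⟩
    obtain ⟨h, hi⟩ := mem_onesFinset.1 hi
    exact mem_onesFinset.2 ⟨h, hzx _ hi⟩
  · rintro ⟨D, ⟨hDx, hDd⟩, rfl⟩
    have hones := onesFinset_decide_mem (hDx.trans (onesFinset_subset_range x))
    refine ⟨fun i => decide ((i : ℕ) ∈ D), fun i hi => ?_, ?_, ?_⟩
    · obtain ⟨_, hi⟩ := mem_onesFinset.1 (hDx (of_decide_eq_true hi))
      exact hi
    · rwa [← card_onesFinset, hones]
    · beta_reduce
      rw [sum_ite_eq_sum_onesFinset_sdiff x (fun i => decide ((i : ℕ) ∈ D))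
        (fun i => 2 ^ (n - 1 - i)), hones]

theorem drBinVal_le {n d : ℕ} {x : Fin n → Bool} {D : Finset ℕ} (hD : D ⊆ onesFinset x)
    (hDd : #D ≤ d) : drBinVal n d x ≤ ∑ i ∈ onesFinset x \ D, 2 ^ (n - 1 - i) := by
  rw [drBinVal_eq_sInf]
  exact Nat.sInf_le ⟨D, ⟨hD, hDd⟩, rfl⟩

theorem le_drBinVal {n d b : ℕ} {x : Fin n → Bool}
    (h : ∀ D ⊆ onesFinset x, #D ≤ d → b ≤ ∑ i ∈ onesFinset x \ D, 2 ^ (n - 1 - i)) :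
    b ≤ drBinVal n d x := by
  rw [drBinVal_eq_sInf]
  refine le_csInf ⟨_, ∅, ⟨empty_subset _, by simp⟩, rfl⟩ ?_
  rintro _ ⟨D, ⟨hD, hDd⟩, rfl⟩
  exact h D hD hDd

/-- For deletion-robust BinVal with budget `k ≤ n` and `d < k`, the string
`1^k 0^(n-k)` is the unique optimal solution. -/
theorem deletion_robust_binval_unique_optimum (n d k : ℕ) (hd : d < k) (hk : k ≤ n) :
    ∀ x : Fin n → Bool, onesCount x ≤ k → x ≠ (fun i : Fin n => decide ((i : ℕ) < k)) →
      drBinVal n d x < drBinVal n d (fun i => decide ((i : ℕ) < k)) := by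
  intro x hx hne
  have hw : StrictAntiOn (fun i : ℕ => 2 ^ (n - 1 - i)) (Set.Iio n) := fun i hi j hj hij =>
    Nat.pow_lt_pow_right one_lt_two (by rw [Set.mem_Iio] at hi hj; omega)
  have hxk : onesFinset x ≠ range k := onesFinset_decide_lt hk ▸ onesFinset_injective.ne hne
  obtain ⟨D, hDx, hDd, hlt⟩ := exists_sum_sdiff_lt_sum_Ico hw (fun _ _ => by positivity) hd hk
    (onesFinset_subset_range x) (card_onesFinset x ▸ hx) hxk
  calc drBinVal n d x ≤ _ := drBinVal_le hDx hDd
    _ < _ := hlt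
    _ ≤ _ := le_drBinVal fun D hD hDd => by
      rw [onesFinset_decide_lt hk] at hD ⊢
      exact sum_Ico_le_sum_range_sdiff hw hd.le hk hD hDd
end

section
/- For integers n and k with 2 ≤ k < n/2, the ratio of binomial coefficients satisfies C(n−k, k) / C(n, k) ≥ e^{−2k}. -/
open Real

noncomputable def rr (m : ℕ) : ℝ := ((m : ℝ)/(m+1))^m

lemma rr_nonneg (m : ℕ) : 0 ≤ rr m := by
  unfold rr; positivity

lemma rr_succ_le (m : ℕ) : rr (m+1) ≤ rr m := by
  rcases Nat.eq_zero_or_pos m with h | h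
  · subst h; norm_num [rr]
  · have hm : (1:ℝ) ≤ (m:ℝ) := by exact_mod_cast h
    have hM0 : (0:ℝ) < (m:ℝ) := by linarith
    have h1 : (0:ℝ) < (m:ℝ)+1 := by linarith
    have h2 : (0:ℝ) < (m:ℝ)+2 := by linarith
    set M : ℝ := (m:ℝ) with hMdef
    -- (1+t)^m ≤ exp(1/(M+2)) with t = 1/(M(M+2))
    have hb1 : (1 + 1/(M*(M+2))) ≤ Real.exp (1/(M*(M+2))) := by
      have := Real.add_one_le_exp (1/(M*(M+2))); linarith
    have hb : (1 + 1/(M*(M+2)))^m ≤ Real.exp (1/(M+2)) := by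
      calc (1 + 1/(M*(M+2)))^m ≤ (Real.exp (1/(M*(M+2))))^m :=
            pow_le_pow_left₀ (by positivity) hb1 m
        _ = Real.exp ((m:ℝ) * (1/(M*(M+2)))) := by
            rw [← Real.exp_nat_mul]
        _ = Real.exp (1/(M+2)) := by
            congr 1; rw [hMdef]; field_simp
    have hc : Real.exp (1/(M+2)) ≤ (M+2)/(M+1) := by
      have hu : (0:ℝ) < 1 - 1/(M+2) := by
        rw [sub_pos, div_lt_one h2]; linarith
      have hE := Real.exp_pos (1/(M+2))
      have h3 : 1 - 1/(M+2) ≤ (Real.exp (1/(M+2)))⁻¹ := by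
        rw [← Real.exp_neg]
        have := Real.add_one_le_exp (-(1/(M+2))); linarith
      have h4 : (1 - 1/(M+2)) * Real.exp (1/(M+2)) ≤ 1 := by
        have := mul_le_mul_of_nonneg_right h3 hE.le
        rwa [inv_mul_cancel₀ hE.ne'] at this
      have h5 : Real.exp (1/(M+2)) ≤ 1/(1 - 1/(M+2)) := by
        rw [le_div_iff₀ hu]; linarith
      have h6 : 1/(1 - 1/(M+2)) = (M+2)/(M+1) := by
        rw [show (1:ℝ) - 1/(M+2) = (M+1)/(M+2) by field_simp; ring, one_div_div]
      linarith [h6 ▸ h5]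
    -- key polynomial inequality
    have key : (M+1)^(2*m+1) ≤ M^m * (M+2)^(m+1) := by
      have e1 : (M+1)^(2*m+1) = (M*(M+2))^m * ((1 + 1/(M*(M+2)))^m * (M+1)) := by
        have hh : M*(M+2) * (1 + 1/(M*(M+2))) = (M+1)^2 := by field_simp; ring
        calc (M+1)^(2*m+1) = ((M+1)^2)^m * (M+1) := by rw [pow_succ, pow_mul]
          _ = (M*(M+2) * (1 + 1/(M*(M+2))))^m * (M+1) := by rw [hh]
          _ = (M*(M+2))^m * ((1 + 1/(M*(M+2)))^m * (M+1)) := by rw [mul_pow]; ring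
      have e2 : M^m * (M+2)^(m+1) = (M*(M+2))^m * (M+2) := by
        rw [mul_pow, pow_succ]; ring
      rw [e1, e2]
      have hP : (0:ℝ) < (M*(M+2))^m := by positivity
      have : (1 + 1/(M*(M+2)))^m * (M+1) ≤ M+2 := by
        calc (1 + 1/(M*(M+2)))^m * (M+1) ≤ Real.exp (1/(M+2)) * (M+1) :=
              mul_le_mul_of_nonneg_right hb h1.le
          _ ≤ (M+2)/(M+1) * (M+1) := mul_le_mul_of_nonneg_right hc h1.le
          _ = M+2 := by field_simp
      exact mul_le_mul_of_nonneg_left this hP.le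
    -- derive rr inequality
    unfold rr
    push_cast
    rw [div_pow, div_pow, div_le_div_iff₀ (by positivity) (by positivity)]
    calc (M+1)^(m+1) * (M+1)^m = (M+1)^(2*m+1) := by rw [← pow_add]; ring_nf
      _ ≤ M^m * (M+2)^(m+1) := key
      _ = M^m * (M+1+1)^(m+1) := by ring_nf

lemma rr_antitone : Antitone rr := antitone_nat_of_succ_le rr_succ_le

noncomputable def ff (m : ℕ) : ℝ := (m.factorial : ℝ) / (m:ℝ)^m

lemma ff_pos (m : ℕ) : 0 < ff m := by
  rcases Nat.eq_zero_or_pos m with h | h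
  · subst h; norm_num [ff]
  · have : (0:ℝ) < (m:ℝ) := by exact_mod_cast h
    unfold ff
    have : (0:ℝ) < (m.factorial : ℝ) := by exact_mod_cast m.factorial_pos
    positivity

lemma ff_succ (m : ℕ) : ff (m+1) = ff m * rr m := by
  rcases Nat.eq_zero_or_pos m with h | h
  · subst h; norm_num [ff, rr]
  · have hm : (0:ℝ) < (m:ℝ) := by exact_mod_cast h
    have h1 : (0:ℝ) < (m:ℝ)+1 := by linarith
    unfold ff rr
    rw [Nat.factorial_succ, div_pow]
    push_cast
    rw [pow_succ]
    field_simp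

lemma ff_sq (a k : ℕ) : ff a * ff (a + 2*k) ≤ ff (a+k)^2 := by
  induction k with
  | zero => simp [sq]
  | succ k ih =>
    have e1 : a + 2*(k+1) = (a + 2*k) + 1 + 1 := by ring
    have e2 : a + (k+1) = (a+k)+1 := by ring
    rw [e1, e2, ff_succ, ff_succ, ff_succ]
    have h1 : rr (a+2*k) ≤ rr (a+k) := rr_antitone (by omega)
    have h2 : rr (a+2*k+1) ≤ rr (a+k) := rr_antitone (by omega)
    have hra : 0 ≤ rr (a+2*k) := rr_nonneg _
    have hrb : 0 ≤ rr (a+2*k+1) := rr_nonneg _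
    have hfa := (ff_pos a).le
    have hfk := (ff_pos (a+k)).le
    have hf2k := (ff_pos (a+2*k)).le
    calc ff a * (ff (a+2*k) * rr (a+2*k) * rr (a+2*k+1))
        = (ff a * ff (a+2*k)) * (rr (a+2*k) * rr (a+2*k+1)) := by ring
      _ ≤ ff (a+k)^2 * (rr (a+k) * rr (a+k)) := by
          apply mul_le_mul ih (mul_le_mul h1 h2 hrb (rr_nonneg _))
            (by positivity) (by positivity)
      _ = (ff (a+k) * rr (a+k))^2 := by ring

lemma exp_le_one_sub {x : ℝ} (hx0 : 0 ≤ x) (hx : x ≤ 1/2) :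
    Real.exp (-(2*x)) ≤ 1 - x := by
  have h1 := Real.add_one_le_exp (2*x)
  have h2 : Real.exp (-(2*x)) * Real.exp (2*x) = 1 := by
    rw [← Real.exp_add]; norm_num
  have h3 := Real.exp_pos (2*x)
  nlinarith [Real.exp_pos (-(2*x))]

/-- For integers `n, k` with `2 ≤ k < n/2`, `C(n-k, k) / C(n, k) ≥ e^(-2k)`. -/
theorem choose_ratio_ge (n k : ℕ) (hk : 2 ≤ k) (hkn : 2 * k < n) :
    (((n - k).choose k : ℝ)) / (n.choose k : ℝ) ≥ Real.exp (-(2 * k)) := by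
  obtain ⟨a, ha, rfl⟩ : ∃ a, 1 ≤ a ∧ a + 2*k = n := ⟨n - 2*k, by omega, by omega⟩
  have hnk : a + 2*k - k = a + k := by omega
  rw [hnk]
  have ha0 : (0:ℝ) < a := by exact_mod_cast ha
  have hk1 : 0 < k := by omega
  have hk0 : (0:ℝ) < k := by exact_mod_cast hk1
  rw [ge_iff_le, Nat.cast_choose ℝ (show k ≤ a + k by omega),
    Nat.cast_choose ℝ (show k ≤ a + 2*k by omega),
    show a + k - k = a from by omega, show a + 2*k - k = a + k from by omega]
  have hFpos : ∀ m : ℕ, (0:ℝ) < (m.factorial : ℝ) := fun m => by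
    exact_mod_cast m.factorial_pos
  have hXpos : ∀ m : ℕ, 0 < m → (0:ℝ) < (m:ℝ)^m := fun m hm => by
    have : (0:ℝ) < (m:ℝ) := by exact_mod_cast hm
    positivity
  have hR : ((((a+k).factorial : ℝ))/((k.factorial:ℝ) * (a.factorial:ℝ))) /
      (((a+2*k).factorial : ℝ)/((k.factorial:ℝ) * ((a+k).factorial:ℝ)))
      = ((a+k).factorial : ℝ)^2 / ((a.factorial:ℝ) * ((a+2*k).factorial:ℝ)) := by
    have h1 := hFpos k
    have h2 := hFpos a
    have h3 := hFpos (a+k)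
    have h4 := hFpos (a+2*k)
    field_simp
  rw [hR]
  -- express factorials via ff
  have hFf : ∀ m : ℕ, (m.factorial : ℝ) = ff m * (m:ℝ)^m := fun m => by
    unfold ff
    rcases Nat.eq_zero_or_pos m with h | h
    · subst h; norm_num
    · field_simp
  have hX1 := hXpos a ha
  have hX2 := hXpos (a+k) (by omega)
  have hX3 := hXpos (a+2*k) (by omega)
  have hf1 := ff_pos a
  have hf2 := ff_pos (a+k)
  have hf3 := ff_pos (a+2*k)
  have hsplit : ((a+k).factorial : ℝ)^2 / ((a.factorial:ℝ) * ((a+2*k).factorial:ℝ))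
      = (ff (a+k)^2 / (ff a * ff (a+2*k))) *
        ((((a+k:ℕ):ℝ)^(a+k))^2 / (((a:ℕ):ℝ)^a * ((a+2*k:ℕ):ℝ)^(a+2*k))) := by
    rw [hFf (a+k), hFf a, hFf (a+2*k)]
    field_simp
  rw [hsplit]
  have hffge : (1:ℝ) ≤ ff (a+k)^2 / (ff a * ff (a+2*k)) := by
    rw [le_div_iff₀ (by positivity)]
    simpa using ff_sq a k
  -- the power part is at least exp(-(2k))
  have hQ : Real.exp (-(2*(k:ℝ))) ≤
      (((a+k:ℕ):ℝ)^(a+k))^2 / (((a:ℕ):ℝ)^a * ((a+2*k:ℕ):ℝ)^(a+2*k)) := by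
    have hAK : ((a+k:ℕ):ℝ) = (a:ℝ) + k := by push_cast; ring
    have hA2K : ((a+2*k:ℕ):ℝ) = (a:ℝ) + 2*k := by push_cast; ring
    rw [hAK, hA2K]
    set A := (a:ℝ)
    set K := (k:ℝ)
    have hQeq : ((A+K)^(a+k))^2 / (A^a * (A+2*K)^(a+2*k))
        = ((A+K)/(A+2*K))^(a+2*k) * ((A+K)/A)^a := by
      rw [div_pow, div_pow, ← pow_mul]
      rw [show (a+k)*2 = (a+2*k) + a from by ring, pow_add]
      field_simp
    rw [hQeq]
    have hone : (1:ℝ) ≤ ((A+K)/A)^a := by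
      apply one_le_pow₀
      rw [le_div_iff₀ ha0]
      linarith
    have hx0 : (0:ℝ) ≤ K/(A+2*K) := by positivity
    have hx2 : K/(A+2*K) ≤ 1/2 := by
      rw [div_le_div_iff₀ (by linarith) (by norm_num)]
      linarith
    have hxe : Real.exp (-(2*(K/(A+2*K)))) ≤ (A+K)/(A+2*K) := by
      have := exp_le_one_sub hx0 hx2
      have heq : 1 - K/(A+2*K) = (A+K)/(A+2*K) := by
        field_simp; ring
      linarith [heq ▸ this]
    calc Real.exp (-(2*K))
        = (Real.exp (-(2*(K/(A+2*K)))))^(a+2*k) := by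
          rw [← Real.exp_nat_mul]
          congr 1
          have hNK : ((a+2*k : ℕ):ℝ) = A + 2*K := by push_cast; ring
          rw [hNK]
          field_simp
      _ ≤ ((A+K)/(A+2*K))^(a+2*k) :=
          pow_le_pow_left₀ (Real.exp_pos _).le hxe _
      _ ≤ ((A+K)/(A+2*K))^(a+2*k) * ((A+K)/A)^a := by
          nlinarith [pow_nonneg (show (0:ℝ) ≤ (A+K)/(A+2*K) by positivity) (a+2*k)]
  calc Real.exp (-(2*(k:ℝ)))
      ≤ (((a+k:ℕ):ℝ)^(a+k))^2 / (((a:ℕ):ℝ)^a * ((a+2*k:ℕ):ℝ)^(a+2*k)) := hQ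
    _ ≤ (ff (a+k)^2 / (ff a * ff (a+2*k))) *
        ((((a+k:ℕ):ℝ)^(a+k))^2 / (((a:ℕ):ℝ)^a * ((a+2*k:ℕ):ℝ)^(a+2*k))) := by
        nlinarith [hffge, div_pos (pow_pos hX2 2) (mul_pos hX1 hX3)]
end

section
/- Let x ∈ {0,1}^n with |x|_1 > k, where k < n/2. Under bit-wise mutation with flip probability 1/n, the probability that the offspring has exactly k ones is at least C(|x|_1, |x|_1 − k) / (e · n^{|x|_1 − k}), the probability that the offspring has fewer than k ones is at most C(|x|_1, |x|_1 − k + 1) / n^{|x|_1 − k + 1}, and the ratio of the former to the latter is at least n(|x|_1 − k + 1)/(e·k) ≥ 1. -/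
/-- Probability that bit-wise mutation with flip probability `1/n` turns `x` into `y`. -/
noncomputable def mutProb (n : ℕ) (x y : Fin n → Bool) : ℝ :=
  (1 / (n : ℝ)) ^ (hammingDist x y) * (1 - 1 / (n : ℝ)) ^ (n - hammingDist x y)

open Finset
open scoped symmDiff

theorem sum_superset_pow_mul_one_sub_pow {α R : Type*} [Fintype α] [DecidableEq α]
    [CommRing R] (p : R) (T : Finset α) :
    ∑ s with T ⊆ s, p ^ #s * (1 - p) ^ (Fintype.card α - #s) = p ^ #T := by
  have hIcc : ({s | T ⊆ s} : Finset (Finset α)) = Icc T univ := by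
    ext s; simp
  rw [hIcc, Icc_eq_image_powerset (subset_univ T), sum_image]
  · calc ∑ u ∈ (univ \ T).powerset, p ^ #(T ∪ u) * (1 - p) ^ (Fintype.card α - #(T ∪ u))
        = ∑ u ∈ (univ \ T).powerset, p ^ #T * (p ^ #u * (1 - p) ^ (#(univ \ T) - #u)) := by
          refine sum_congr rfl fun u hu => ?_
          have hdisj : Disjoint T u := disjoint_of_subset_right (mem_powerset.1 hu) disjoint_sdiff
          rw [card_union_of_disjoint hdisj, card_sdiff_of_subset (subset_univ T), card_univ,
            pow_add, Nat.sub_add_eq]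
          ring
      _ = p ^ #T := by rw [← mul_sum, sum_pow_mul_eq_add_pow, add_sub_cancel, one_pow, mul_one]
  · intro u hu v hv huv
    have hu' := disjoint_of_subset_right (mem_powerset.1 hu) (disjoint_sdiff (s := T) (t := univ))
    have hv' := disjoint_of_subset_right (mem_powerset.1 hv) (disjoint_sdiff (s := T) (t := univ))
    have := congrArg (· \ T) huv
    simp only [union_sdiff_left] at this
    rwa [hu'.symm.sdiff_eq_left, hv'.symm.sdiff_eq_left] at this

theorem sum_biUnion_le_sum_sum {ι κ R : Type*} [DecidableEq ι]
    [AddCommMonoid R] [PartialOrder R] [IsOrderedAddMonoid R]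
    {f : ι → R} (hf : ∀ i, 0 ≤ f i) (Ts : Finset κ) (A : κ → Finset ι) :
    ∑ i ∈ Ts.biUnion A, f i ≤ ∑ T ∈ Ts, ∑ i ∈ A T, f i := by
  rw [← sup_eq_biUnion]
  refine apply_sup_le_sum (f := fun B => ∑ i ∈ B, f i) sum_empty (fun {B C} => ?_) Ts
  rw [sup_eq_union, ← union_sdiff_self_eq_union, sum_union disjoint_sdiff]
  exact add_le_add_right (sum_le_sum_of_subset_of_nonneg sdiff_subset fun i _ _ => hf i) _

theorem Real.exp_neg_one_le_one_sub_div_pow (n : ℕ) {d : ℕ} (hd : 1 ≤ d) :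
    Real.exp (-1) ≤ (1 - 1 / (n : ℝ)) ^ (n - d) := by
  refine le_trans ?_ (pow_le_pow_of_le_one (Nat.one_sub_one_div_cast_nonneg n) (by simp)
    (Nat.sub_le_sub_left hd n))
  cases n with
  | zero => simp [Real.exp_le_one_iff]
  | succ m =>
    have : (1 - 1 / ((m + 1 : ℕ) : ℝ)) ^ (m + 1 - 1) = ((1 + (m : ℝ)⁻¹) ^ m)⁻¹ := by
      rcases m.eq_zero_or_pos with rfl | hm
      · simp
      · rw [← inv_pow]; congr 1; push_cast; field_simp; ring
    rw [this, Real.exp_neg]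
    exact inv_anti₀ (by positivity) Real.one_add_inv_pow_le_exp

section BitFlips

variable {n : ℕ}

def flipBits (x : Fin n → Bool) (s : Finset (Fin n)) : Fin n → Bool :=
  fun i => xor (x i) (decide (i ∈ s))

def flipBitsEquiv (x : Fin n → Bool) : Finset (Fin n) ≃ (Fin n → Bool) where
  toFun := flipBits x
  invFun y := univ.filter fun i => x i ≠ y i
  left_inv s := by
    ext i
    rw [mem_filter]
    by_cases hs : i ∈ s <;> cases hx : x i <;> simp [flipBits, hs, hx]
  right_inv y := by funext i; cases hx : x i <;> cases hy : y i <;> simp [flipBits, hx, hy]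

theorem hammingDist_flipBits (x : Fin n → Bool) (s : Finset (Fin n)) :
    hammingDist x (flipBits x s) = #s :=
  congrArg card ((flipBitsEquiv x).left_inv s)

theorem onesCount_flipBits (x : Fin n → Bool) (s : Finset (Fin n)) :
    onesCount (flipBits x s) = #(univ.filter (fun i => x i = true) ∆ s) := by
  rw [onesCount]
  congr 1
  ext i
  by_cases hs : i ∈ s <;> cases hx : x i <;> simp [flipBits, mem_symmDiff, hs, hx]

theorem sum_filter_mutProb_eq_sum_flipBits (x : Fin n → Bool) (P : (Fin n → Bool) → Prop)
    [DecidablePred P] :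
    ∑ y with P y, mutProb n x y
      = ∑ s with P (flipBits x s), (1 / (n : ℝ)) ^ #s * (1 - 1 / (n : ℝ)) ^ (n - #s) := by
  rw [sum_filter, sum_filter, ← (flipBitsEquiv x).sum_comp]
  simp only [flipBitsEquiv, Equiv.coe_fn_mk, mutProb, hammingDist_flipBits]

theorem choose_div_exp_mul_pow_le_sum_mutProb (x : Fin n → Bool) {k : ℕ}
    (hk : k < onesCount x) :
    ((onesCount x).choose (onesCount x - k) : ℝ) / (Real.exp 1 * (n : ℝ) ^ (onesCount x - k))
      ≤ ∑ y with onesCount y = k, mutProb n x y := by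
  set O := univ.filter fun i => x i = true
  set d := onesCount x - k
  have hflip : ∀ s ∈ O.powersetCard d, onesCount (flipBits x s) = k := by
    intro s hs
    rw [mem_powersetCard] at hs
    rw [onesCount_flipBits, symmDiff_of_ge hs.1, card_sdiff_of_subset hs.1, hs.2]
    change onesCount x - (onesCount x - k) = k
    omega
  rw [sum_filter_mutProb_eq_sum_flipBits]
  calc ((onesCount x).choose d : ℝ) / (Real.exp 1 * (n : ℝ) ^ d)
      = (onesCount x).choose d * ((1 / (n : ℝ)) ^ d * Real.exp (-1)) := by
        rw [Real.exp_neg, one_div, inv_pow]; field_simp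
    _ ≤ (onesCount x).choose d * ((1 / (n : ℝ)) ^ d * (1 - 1 / (n : ℝ)) ^ (n - d)) := by
        gcongr
        exact Real.exp_neg_one_le_one_sub_div_pow n (by omega)
    _ = ∑ s ∈ O.powersetCard d, (1 / (n : ℝ)) ^ #s * (1 - 1 / (n : ℝ)) ^ (n - #s) := by
        rw [sum_congr rfl fun s hs => by rw [(mem_powersetCard.1 hs).2], sum_const,
          card_powersetCard, nsmul_eq_mul]
        rfl
    _ ≤ _ := by
        refine sum_le_sum_of_subset_of_nonneg (fun s hs => ?_) fun s _ _ => ?_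
        · simpa using hflip s hs
        · have := Nat.one_sub_one_div_cast_nonneg (α := ℝ) n
          positivity

theorem sum_mutProb_le_choose_div_pow (x : Fin n → Bool) {k : ℕ} (hk : k ≤ onesCount x) :
    ∑ y with onesCount y < k, mutProb n x y
      ≤ ((onesCount x).choose (onesCount x - k + 1) : ℝ) /
          (n : ℝ) ^ (onesCount x - k + 1) := by
  set O := univ.filter fun i => x i = true
  set d := onesCount x - k
  have hcover : univ.filter (fun s => onesCount (flipBits x s) < k)
      ⊆ (O.powersetCard (d + 1)).biUnion fun T => univ.filter (T ⊆ ·) := by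
    intro s hs
    replace hs : #(O ∆ s) < k := onesCount_flipBits x s ▸ (mem_filter.1 hs).2
    have hO : #O ≤ #(O ∆ s) + #(O ∩ s) :=
      (card_sdiff_add_card_inter O s).symm.le.trans
        (Nat.add_le_add_right (card_le_card symmDiff_subset_sdiff) _)
    obtain ⟨T, hTs, hT⟩ := exists_subset_card_eq (s := O ∩ s) (n := d + 1) (by
      change onesCount x ≤ _ at hO; omega)
    exact mem_biUnion.2 ⟨T, mem_powersetCard.2 ⟨hTs.trans inter_subset_left, hT⟩,
      mem_filter.2 ⟨mem_univ _, hTs.trans inter_subset_right⟩⟩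
  rw [sum_filter_mutProb_eq_sum_flipBits]
  calc _ ≤ ∑ T ∈ O.powersetCard (d + 1), ∑ s with T ⊆ s,
          (1 / (n : ℝ)) ^ #s * (1 - 1 / (n : ℝ)) ^ (n - #s) := by
        have := Nat.one_sub_one_div_cast_nonneg (α := ℝ) n
        exact (sum_le_sum_of_subset_of_nonneg hcover fun s _ _ => by positivity).trans
          (sum_biUnion_le_sum_sum (fun s => by positivity) _ _)
    _ = ∑ T ∈ O.powersetCard (d + 1), (1 / (n : ℝ)) ^ (d + 1) := by
        refine sum_congr rfl fun T hT => ?_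
        have := sum_superset_pow_mul_one_sub_pow (1 / (n : ℝ)) T
        rwa [Fintype.card_fin, (mem_powersetCard.1 hT).2] at this
    _ = _ := by
        rw [sum_const, card_powersetCard, nsmul_eq_mul, div_pow, one_pow, mul_one_div]
        rfl

end BitFlips

/-- For `x` with `|x|₁ > k` where `1 ≤ k < n/2`: under bit-wise mutation, the
probability that the offspring has exactly `k` ones is at least
`C(|x|₁, |x|₁-k)/(e·n^(|x|₁-k))`, the probability that it has fewer than `k` ones is
at most `C(|x|₁, |x|₁-k+1)/n^(|x|₁-k+1)`, and the former is at least
`n(|x|₁-k+1)/(e·k) ≥ 1` times the latter. -/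
theorem mutation_reach_k_ones (n k : ℕ) (hk : 1 ≤ k) (hkn : 2 * k < n)
    (x : Fin n → Bool) (hx : k < onesCount x) :
    (∑ y ∈ Finset.univ.filter (fun y : Fin n → Bool => onesCount y = k), mutProb n x y)
      ≥ ((onesCount x).choose (onesCount x - k) : ℝ) /
          (Real.exp 1 * (n : ℝ) ^ (onesCount x - k)) ∧
    (∑ y ∈ Finset.univ.filter (fun y : Fin n → Bool => onesCount y < k), mutProb n x y)
      ≤ ((onesCount x).choose (onesCount x - k + 1) : ℝ) /
          (n : ℝ) ^ (onesCount x - k + 1) ∧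
    (∑ y ∈ Finset.univ.filter (fun y : Fin n → Bool => onesCount y = k), mutProb n x y)
      ≥ ((n : ℝ) * ((onesCount x : ℝ) - k + 1) / (Real.exp 1 * k)) *
        (∑ y ∈ Finset.univ.filter (fun y : Fin n → Bool => onesCount y < k), mutProb n x y) ∧
    (n : ℝ) * ((onesCount x : ℝ) - k + 1) / (Real.exp 1 * k) ≥ 1 := by
  set m := onesCount x
  set d := m - k
  have hreach := choose_div_exp_mul_pow_le_sum_mutProb x hx
  have hfall := sum_mutProb_le_choose_div_pow x hx.le
  have hd : (m : ℝ) - k + 1 = (d : ℝ) + 1 := by simp only [d, Nat.cast_sub hx.le]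
  have hchoose : (m.choose (d + 1) : ℝ) * ((d : ℝ) + 1) = m.choose d * k := by
    have := Nat.choose_succ_right_eq m d
    rw [Nat.sub_sub_self hx.le] at this
    exact_mod_cast this
  have hk_real : (1 : ℝ) ≤ k := by exact_mod_cast hk
  have hkn_real : 2 * (k : ℝ) + 1 ≤ n := by exact_mod_cast hkn
  refine ⟨hreach, hfall, ?_, ?_⟩
  · calc (n : ℝ) * ((m : ℝ) - k + 1) / (Real.exp 1 * k) *
            ∑ y with onesCount y < k, mutProb n x y
        ≤ (n : ℝ) * ((d : ℝ) + 1) / (Real.exp 1 * k) *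
            (m.choose (d + 1) / (n : ℝ) ^ (d + 1)) := by
          rw [hd]; gcongr
      _ = m.choose d / (Real.exp 1 * (n : ℝ) ^ d) := by
          have : (n : ℝ) ≠ 0 := by linarith
          have : (k : ℝ) ≠ 0 := by linarith
          field_simp
          linear_combination (n : ℝ) ^ (d + 1) * hchoose
      _ ≤ _ := hreach
  · rw [hd, ge_iff_le, one_le_div₀ (by positivity)]
    have : (1 : ℝ) ≤ d := by exact_mod_cast (by omega : 1 ≤ d)
    nlinarith [Real.exp_one_lt_d9]
end
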